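/- arXiv:1707.05824 — 5 statements merged into one kernel-verified Lean document; each statement's English description precedes it below -/
import Mathlib

section
/- For every real number r ≥ 0 and every ε with 0 < ε < 1, the function χ defined by χ(r) = (1 - ln r)·r for 0 < r < 1 and χ(r) = 1 for r ≥ 1 (with χ(0) = 0) satisfies χ(r) ≤ (-ln ε)·r + ε. -/
noncomputable def chi (r : ℝ) : ℝ := if r < 1 then (1 - Real.log r) * r else 1

/-! The right-hand side is the tangent line at `r = ε` of the concave function
`r ↦ (1 - log r) * r`, so it dominates that function on `[0, ∞)`. For `r ≥ 1`, where `χ r = 1`,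
the tangent line has positive slope `-log ε`, so it is at least its value at `1`, which
dominates `(1 - log 1) * 1 = 1`. -/

open Real in
lemma one_sub_log_mul_le_tangent {r ε : ℝ} (hr : 0 ≤ r) (hε : 0 < ε) :
    (1 - log r) * r ≤ -log ε * r + ε := by
  rcases hr.eq_or_lt with rfl | hr
  · simpa using hε.le
  have hlog : log (ε / r) ≤ ε / r - 1 := log_le_sub_one_of_pos (by positivity)
  rw [log_div hε.ne' hr.ne'] at hlog
  calc (1 - log r) * r = (log ε - log r + 1) * r - log ε * r := by ring
    _ ≤ ε / r * r - log ε * r := by gcongr; linarith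
    _ = -log ε * r + ε := by field_simp; ring

theorem stmt0 (r : ℝ) (hr : 0 ≤ r) (ε : ℝ) (hε0 : 0 < ε) (hε1 : ε < 1) :
    chi r ≤ (-Real.log ε) * r + ε := by
  unfold chi
  split_ifs with hr1
  · exact one_sub_log_mul_le_tangent hr hε0
  · have hslope : 0 ≤ -Real.log ε := neg_nonneg.mpr (Real.log_nonpos hε0.le hε1.le)
    calc (1 : ℝ) = (1 - Real.log 1) * 1 := by simp
      _ ≤ -Real.log ε * 1 + ε := one_sub_log_mul_le_tangent zero_le_one hε0
      _ ≤ -Real.log ε * r + ε := by gcongr; linarith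
end

section
/- Let ξ, η ∈ ℝ² with δ = |ξ - η| > 0, and let R ≥ 2δ be such that the domain M ⊆ ℝ² is contained in the ball B(ξ, R). Then ∫_M | 1/|y-ξ| − 1/|y-η| | dy ≤ C(n)·(1 + ln R − ln δ)·δ for an absolute constant C, i.e., the integral is bounded by a constant multiple of (1 − ln δ)·δ plus (ln R)·δ. -/
/-!
Split `M` along the circle `|y - ξ| = 2δ`. Inside, bound the integrand by
`1/|y - ξ| + 1/|y - η|`; the set lies in `B(ξ, 2δ)` and in `B(η, 3δ)`, and in polar coordinates
`∫_{B(c, r)} 1/|y - c| dy = 2πr`, so this part is `O(δ)`. Outside, `|y - η| ≥ |y - ξ|/2`, hence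
`|1/|y - ξ| - 1/|y - η|| ≤ 2δ/|y - ξ|²`, and `∫_{2δ ≤ |y - ξ| < R} |y - ξ|⁻² dy = 2π log (R/2δ)`.
-/

open MeasureTheory Measure Metric Set Real

lemma abs_one_div_dist_sub_one_div_dist_le {X : Type*} [PseudoMetricSpace X] {x y z : X}
    (h : 2 * dist x y ≤ dist z x) :
    |1 / dist z x - 1 / dist z y| ≤ 2 * dist x y / dist z x ^ 2 := by
  have hxy : |dist z x - dist z y| ≤ dist x y := by
    simpa only [dist_comm z] using abs_dist_sub_le x y z
  have hδ : 0 ≤ dist x y := dist_nonneg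
  rcases (dist_nonneg : 0 ≤ dist z x).eq_or_lt with hx | hx
  · have : dist z y = 0 := by
      have := abs_le.1 hxy; linarith
    simp [← hx, this]
  · have hy : dist z x / 2 ≤ dist z y := by
      have := abs_le.1 hxy; linarith
    have hy' : 0 < dist z y := by linarith
    rw [div_sub_div _ _ hx.ne' hy'.ne', abs_div, abs_of_pos (mul_pos hx hy'),
      div_le_div_iff₀ (mul_pos hx hy') (by positivity), one_mul, mul_one, abs_sub_comm]
    calc |dist z x - dist z y| * dist z x ^ 2 ≤ dist x y * (dist z x * dist z x) := by
          rw [sq]; gcongr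
      _ ≤ dist x y * (dist z x * (2 * dist z y)) := by gcongr; linarith
      _ = 2 * dist x y * (dist z x * dist z y) := by ring

lemma indicator_preimage_dist {E F : Type*} [SeminormedAddCommGroup E] [Zero F] (c : E)
    (f : ℝ → F) (s : Set ℝ) (y : E) :
    ((dist · c) ⁻¹' s).indicator (fun y => f (dist y c)) y = s.indicator f ‖y - c‖ := by
  rw [← dist_eq_norm]
  exact indicator_comp_right (dist · c) (g := f)

lemma measurableSet_preimage_dist {E : Type*} [PseudoMetricSpace E] [MeasurableSpace E]
    [OpensMeasurableSpace E] (c : E) {s : Set ℝ} (hs : MeasurableSet s) :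
    MeasurableSet ((dist · c) ⁻¹' s) :=
  (continuous_id.dist continuous_const).measurable hs

section Radial

variable {E F : Type*} [NormedAddCommGroup E] [NormedSpace ℝ E] [FiniteDimensional ℝ E]
  [Nontrivial E] [MeasurableSpace E] [BorelSpace E] (μ : Measure E) [μ.IsAddHaarMeasure]
  [NormedAddCommGroup F] [NormedSpace ℝ F] {s : Set ℝ}

lemma integrableOn_fun_dist_preimage_iff (c : E) {f : ℝ → F} (hs : MeasurableSet s) :
    IntegrableOn (fun y => f (dist y c)) ((dist · c) ⁻¹' s) μ ↔
      IntegrableOn (fun t => t ^ (Module.finrank ℝ E - 1) • f t) (s ∩ Ioi 0) := by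
  rw [← integrable_indicator_iff (measurableSet_preimage_dist c hs),
    funext (indicator_preimage_dist c f s)]
  change Integrable ((fun x => s.indicator f ‖x‖) ∘ (· - c)) μ ↔ _
  rw [(measurePreserving_sub_right μ c).integrable_comp_emb (measurableEmbedding_subRight c),
    integrable_fun_norm_addHaar μ (f := s.indicator f), ← integrableOn_indicator_iff hs,
    indicator_smul]

lemma setIntegral_fun_dist_preimage (c : E) (f : ℝ → F) (hs : MeasurableSet s) :
    ∫ y in (dist · c) ⁻¹' s, f (dist y c) ∂μ =
      Module.finrank ℝ E • μ.real (ball 0 1) •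
        ∫ t in s ∩ Ioi 0, t ^ (Module.finrank ℝ E - 1) • f t := by
  rw [← integral_indicator (measurableSet_preimage_dist c hs),
    funext (indicator_preimage_dist c f s),
    integral_sub_right_eq_self (fun x => s.indicator f ‖x‖) c,
    integral_fun_norm_addHaar μ (s.indicator f), inter_comm, ← setIntegral_indicator hs]
  simp only [indicator_smul_apply]

end Radial

section Plane

variable (c : EuclideanSpace ℝ (Fin 2)) {s : Set ℝ}

lemma setIntegral_fun_dist_preimage_fin_two (f : ℝ → ℝ) (hs : MeasurableSet s) :
    ∫ y in (dist · c) ⁻¹' s, f (dist y c) = 2 * π * ∫ t in s ∩ Ioi 0, t * f t := by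
  rw [setIntegral_fun_dist_preimage volume c f hs, finrank_euclideanSpace_fin, measureReal_def,
    EuclideanSpace.volume_ball_fin_two]
  simp [pi_nonneg, mul_assoc]

lemma integrableOn_fun_dist_preimage_fin_two_iff {f : ℝ → ℝ} (hs : MeasurableSet s) :
    IntegrableOn (fun y => f (dist y c)) ((dist · c) ⁻¹' s) ↔
      IntegrableOn (fun t => t * f t) (s ∩ Ioi 0) := by
  rw [integrableOn_fun_dist_preimage_iff volume c hs, finrank_euclideanSpace_fin]
  simp

lemma integrableOn_ball_one_div_dist (r : ℝ) :
    IntegrableOn (fun y => 1 / dist y c) (ball c r) := by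
  refine (integrableOn_fun_dist_preimage_fin_two_iff c measurableSet_Iio).2 ?_
  rw [Iio_inter_Ioi]
  exact (integrableOn_const measure_Ioo_lt_top.ne).congr_fun
    (fun t ht => (mul_one_div_cancel ht.1.ne').symm) measurableSet_Ioo

lemma setIntegral_ball_one_div_dist {r : ℝ} (hr : 0 ≤ r) :
    ∫ y in ball c r, 1 / dist y c = 2 * π * r := by
  rw [show ball c r = (dist · c) ⁻¹' Iio r from rfl,
    setIntegral_fun_dist_preimage_fin_two c _ measurableSet_Iio, Iio_inter_Ioi,
    setIntegral_congr_fun measurableSet_Ioo (fun t ht => mul_one_div_cancel ht.1.ne'),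
    setIntegral_const, volume_real_Ioo_of_le hr]
  simp

lemma setIntegral_one_div_dist_le {t : Set (EuclideanSpace ℝ (Fin 2))} {r : ℝ}
    (ht : t ⊆ ball c r) (hr : 0 ≤ r) :
    ∫ y in t, 1 / dist y c ≤ 2 * π * r :=
  setIntegral_ball_one_div_dist c hr ▸
    setIntegral_mono_set (integrableOn_ball_one_div_dist c r)
      (.of_forall fun _ => by positivity) ht.eventuallyLE

lemma integrableOn_preimage_Ico_one_div_dist_sq {a R : ℝ} (ha : 0 < a) :
    IntegrableOn (fun y => 1 / dist y c ^ 2) ((dist · c) ⁻¹' Ico a R) := by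
  refine (integrableOn_fun_dist_preimage_fin_two_iff c (f := fun t => 1 / t ^ 2)
    measurableSet_Ico).2 ?_
  rw [inter_eq_left.2 (Ico_subset_Ici_self.trans (Ici_subset_Ioi.2 ha))]
  refine (ContinuousOn.integrableOn_Icc ?_).mono_set Ico_subset_Icc_self
  exact continuousOn_id.mul (continuousOn_const.div (continuousOn_id.pow 2)
    fun t ht => pow_ne_zero 2 (ha.trans_le ht.1).ne')

lemma setIntegral_preimage_Ico_one_div_dist_sq {a R : ℝ} (ha : 0 < a) (haR : a ≤ R) :
    ∫ y in (dist · c) ⁻¹' Ico a R, 1 / dist y c ^ 2 = 2 * π * (log R - log a) := by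
  rw [setIntegral_fun_dist_preimage_fin_two c (fun t => 1 / t ^ 2) measurableSet_Ico,
    inter_eq_left.2 (Ico_subset_Ici_self.trans (Ici_subset_Ioi.2 ha)),
    setIntegral_congr_fun measurableSet_Ico (fun t ht => ?_), integral_Ico_eq_integral_Ioc,
    ← intervalIntegral.integral_of_le haR,
    integral_one_div (notMem_uIcc_of_lt ha (ha.trans_le haR)),
    log_div (ha.trans_le haR).ne' ha.ne']
  have : t ≠ 0 := (ha.trans_le ht.1).ne'
  field_simp

variable {ξ η : EuclideanSpace ℝ (Fin 2)} {t : Set (EuclideanSpace ℝ (Fin 2))}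

lemma integrableOn_abs_one_div_dist_sub {r r' : ℝ} (hξ : t ⊆ ball ξ r) (hη : t ⊆ ball η r') :
    IntegrableOn (fun y => |1 / dist y ξ - 1 / dist y η|) t :=
  (((integrableOn_ball_one_div_dist ξ r).mono_set hξ).sub
    ((integrableOn_ball_one_div_dist η r').mono_set hη)).abs

lemma setIntegral_abs_one_div_dist_sub_le {r r' : ℝ} (hξ : t ⊆ ball ξ r) (hη : t ⊆ ball η r')
    (hr : 0 ≤ r) (hr' : 0 ≤ r') :
    ∫ y in t, |1 / dist y ξ - 1 / dist y η| ≤ 2 * π * (r + r') := by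
  have hξint := (integrableOn_ball_one_div_dist ξ r).mono_set hξ
  have hηint := (integrableOn_ball_one_div_dist η r').mono_set hη
  calc ∫ y in t, |1 / dist y ξ - 1 / dist y η|
      ≤ ∫ y in t, (1 / dist y ξ + 1 / dist y η) :=
        setIntegral_mono (integrableOn_abs_one_div_dist_sub hξ hη) (hξint.add hηint) fun y =>
          (abs_sub _ _).trans_eq <| by
            rw [abs_of_nonneg (by positivity), abs_of_nonneg (by positivity)]
    _ = (∫ y in t, 1 / dist y ξ) + ∫ y in t, 1 / dist y η := integral_add hξint hηint
    _ ≤ 2 * π * r + 2 * π * r' :=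
        add_le_add (setIntegral_one_div_dist_le ξ hξ hr) (setIntegral_one_div_dist_le η hη hr')
    _ = 2 * π * (r + r') := by ring

lemma setIntegral_abs_one_div_dist_sub_le_log {R : ℝ} (ht : MeasurableSet t)
    (htR : t ⊆ (dist · ξ) ⁻¹' Ico (2 * dist ξ η) R) (hδ : 0 < dist ξ η)
    (hR : 2 * dist ξ η ≤ R) :
    ∫ y in t, |1 / dist y ξ - 1 / dist y η| ≤
      2 * dist ξ η * (2 * π * (log R - log (2 * dist ξ η))) := by
  have htξ : t ⊆ ball ξ R := fun y hy => (htR hy).2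
  have htη : t ⊆ ball η (R + dist ξ η) := htξ.trans (ball_subset_ball' le_rfl)
  have hbound : IntegrableOn (fun y => 2 * dist ξ η * (1 / dist y ξ ^ 2))
      ((dist · ξ) ⁻¹' Ico (2 * dist ξ η) R) :=
    (integrableOn_preimage_Ico_one_div_dist_sq ξ (by positivity)).const_mul _
  calc ∫ y in t, |1 / dist y ξ - 1 / dist y η|
      ≤ ∫ y in t, 2 * dist ξ η * (1 / dist y ξ ^ 2) :=
        setIntegral_mono_on (integrableOn_abs_one_div_dist_sub htξ htη) (hbound.mono_set htR) ht
          fun y hy => (abs_one_div_dist_sub_one_div_dist_le (htR hy).1).trans_eq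
            (mul_one_div _ _).symm
    _ ≤ ∫ y in (dist · ξ) ⁻¹' Ico (2 * dist ξ η) R, 2 * dist ξ η * (1 / dist y ξ ^ 2) :=
        setIntegral_mono_set hbound (.of_forall fun _ => by positivity) htR.eventuallyLE
    _ = 2 * dist ξ η * (2 * π * (log R - log (2 * dist ξ η))) := by
        rw [integral_const_mul, setIntegral_preimage_Ico_one_div_dist_sq ξ (by positivity) hR]

end Plane

theorem stmt10 :
    ∃ C > 0, ∀ (M : Set (EuclideanSpace ℝ (Fin 2))) (ξ η : EuclideanSpace ℝ (Fin 2)) (R : ℝ),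
      MeasurableSet M → Bornology.IsBounded M → ξ ∈ M → η ∈ M →
      0 < dist ξ η → dist ξ η < 1 → 2 * dist ξ η ≤ R → M ⊆ Metric.ball ξ R →
      (∫ y in M, |1 / dist y ξ - 1 / dist y η|) ≤
        C * (1 + Real.log R - Real.log (dist ξ η)) * dist ξ η := by
  refine ⟨10 * π, by positivity, fun M ξ η R hM _ _ _ hδ _ hR hMR => ?_⟩
  set δ := dist ξ η
  have near : ∫ y in M ∩ ball ξ (2 * δ), |1 / dist y ξ - 1 / dist y η| ≤
      2 * π * (2 * δ + 3 * δ) :=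
    setIntegral_abs_one_div_dist_sub_le inter_subset_right
      (inter_subset_right.trans (ball_subset_ball' (by linarith))) (by positivity) (by positivity)
  have far : ∫ y in M \ ball ξ (2 * δ), |1 / dist y ξ - 1 / dist y η| ≤
      2 * δ * (2 * π * (log R - log (2 * δ))) :=
    setIntegral_abs_one_div_dist_sub_le_log (hM.diff measurableSet_ball)
      (fun y hy => ⟨not_lt.1 hy.2, hMR hy.1⟩) hδ hR
  have hlog₁ := mul_nonneg (mul_nonneg pi_pos.le hδ.le)
    (sub_nonneg.2 (log_le_log hδ (by linarith : δ ≤ 2 * δ)))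
  have hlog₂ := mul_nonneg (mul_nonneg pi_pos.le hδ.le)
    (sub_nonneg.2 (log_le_log (by positivity) hR))
  rw [← integral_inter_add_sdiff measurableSet_ball
    (integrableOn_abs_one_div_dist_sub hMR (hMR.trans (ball_subset_ball' le_rfl)))]
  linear_combination near + far + 10 * hlog₁ + 6 * hlog₂
end

section
/- Osgood uniqueness with log-Lipschitz modulus: suppose a nonnegative continuous function ρ : [0, T] → ℝ satisfies ρ(t) ≤ (−C ln ε) ∫₀ᵗ ρ(s) ds + C ε t for every ε ∈ (0, 1) and every t ∈ [0, T], where C > 0. Then ρ ≡ 0 on [0, min(T, 1/(2C))]; in fact by iteration ρ ≡ 0 on all of [0, T]. -/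
/-! For a fixed ε, Grönwall's inequality turns the hypothesis into
`ρ t ≤ C T ε e^{-C (log ε) t} = C T ε^{1 - C t}`, which tends to `0` as `ε → 0` as long as
`C t < 1`. Once `ρ` vanishes on `[0, a]` the integral from `0` equals the integral from `a`, so
the same argument started at `a` makes `ρ` vanish on successive intervals of length `1 / (2C)`. -/

open Set Real Filter Topology MeasureTheory intervalIntegral

theorem le_mul_exp_of_le_mul_integral_add {f : ℝ → ℝ} {a b K δ : ℝ} (hK : 0 ≤ K)
    (hf : ContinuousOn f (Icc a b))
    (hle : ∀ t ∈ Icc a b, f t ≤ K * (∫ s in a..t, f s) + δ) :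
    ∀ t ∈ Icc a b, f t ≤ δ * exp (K * (t - a)) := by
  intro t ht
  have hab : a ≤ b := ht.1.trans ht.2
  set G : ℝ → ℝ := fun t => K * (∫ s in a..t, f s) + δ
  have hG_cont : ContinuousOn G (Icc a b) := by
    have := continuousOn_primitive_interval (μ := volume) (a := a) (b := b) (f := f)
      (by rw [uIcc_of_le hab]; exact hf.integrableOn_Icc)
    rw [uIcc_of_le hab] at this
    exact (this.const_smul K).add continuousOn_const
  have hG_deriv : ∀ x ∈ Ico a b, HasDerivWithinAt G (K * f x) (Ici x) x := by
    intro x hx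
    have hIcc : Icc a b ∈ 𝓝[>] x := Icc_mem_nhdsGT_of_mem hx
    have hint : IntervalIntegrable f volume a x :=
      (hf.mono (by rw [uIcc_of_le hx.1]; exact Icc_subset_Icc_right hx.2.le)).intervalIntegrable
    have hmeas : StronglyMeasurableAtFilter f (𝓝[>] x) :=
      (hf.stronglyMeasurableAtFilter_nhdsWithin measurableSet_Icc x).filter_mono
        (nhdsWithin_le_of_mem hIcc)
    have hcont : ContinuousWithinAt f (Ioi x) x :=
      (hf x (Ico_subset_Icc_self hx)).mono_of_mem_nhdsWithin hIcc
    exact ((integral_hasDerivWithinAt_right hint hmeas hcont).const_mul K).add_const δ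
  have hG : G t ≤ gronwallBound δ K 0 (t - a) :=
    le_gronwallBound_of_liminf_deriv_right_le hG_cont
      (fun x hx _ hr => (hG_deriv x hx).liminf_right_slope_le hr) (by simp [G])
      (fun x hx => by simpa using mul_le_mul_of_nonneg_left (hle x (Ico_subset_Icc_self hx)) hK)
      t ht
  simpa [gronwallBound_ε0] using (hle t ht).trans hG

theorem nonpos_of_le_mul_rpow {x M p : ℝ} (hp : 0 < p)
    (h : ∀ ε, 0 < ε → ε < 1 → x ≤ M * ε ^ p) : x ≤ 0 := by
  have hlim : Tendsto (fun ε : ℝ => M * ε ^ p) (𝓝[>] 0) (𝓝 0) := by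
    have := ((continuousAt_rpow_const 0 p (Or.inr hp.le)).const_mul M).tendsto
    simpa [zero_rpow hp.ne'] using this.mono_left nhdsWithin_le_nhds
  refine ge_of_tendsto hlim ?_
  filter_upwards [Ioo_mem_nhdsGT one_pos] with ε hε using h ε hε.1 hε.2

theorem nonpos_of_le_neg_log_mul_integral_add {ρ : ℝ → ℝ} {a b C M t : ℝ} (hC : 0 ≤ C)
    (hρ : ContinuousOn ρ (Icc a b))
    (h : ∀ ε, 0 < ε → ε < 1 → ∀ x ∈ Icc a b, ρ x ≤ -C * log ε * (∫ s in a..x, ρ s) + M * ε)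
    (ht : t ∈ Icc a b) (hCt : C * (t - a) < 1) : ρ t ≤ 0 := by
  refine nonpos_of_le_mul_rpow (M := M) (sub_pos.2 hCt) fun ε hε hε1 => ?_
  have hK : 0 ≤ -C * log ε := by nlinarith [log_neg hε hε1]
  calc ρ t ≤ M * ε * exp (-C * log ε * (t - a)) :=
        le_mul_exp_of_le_mul_integral_add hK hρ (h ε hε hε1) t ht
    _ = M * ε ^ (1 - C * (t - a)) := by
        rw [rpow_def_of_pos hε,
          show log ε * (1 - C * (t - a)) = log ε + -C * log ε * (t - a) by ring,
          exp_add, exp_log hε, mul_assoc]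

theorem nonpos_of_integral_eq_zero {ρ : ℝ → ℝ} {T C a t : ℝ} (hC : 0 ≤ C)
    (hρ : ContinuousOn ρ (Icc 0 T))
    (hineq : ∀ ε : ℝ, 0 < ε → ε < 1 → ∀ t ∈ Icc 0 T,
      ρ t ≤ (-C * log ε) * (∫ s in (0:ℝ)..t, ρ s) + C * ε * t)
    (ha : 0 ≤ a) (hρa : ∫ s in 0..a, ρ s = 0) (ht : t ∈ Icc a T) (hCt : C * (t - a) < 1) :
    ρ t ≤ 0 := by
  refine nonpos_of_le_neg_log_mul_integral_add (M := C * T) hC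
    (hρ.mono (Icc_subset_Icc_left ha)) (fun ε hε hε1 x hx => ?_) ht hCt
  have hx₀ : x ∈ Icc 0 T := ⟨ha.trans hx.1, hx.2⟩
  have hsplit : ∫ s in 0..x, ρ s = ∫ s in a..x, ρ s := by
    rw [← integral_add_adjacent_intervals (b := a), hρa, zero_add]
    · refine (hρ.mono ?_).intervalIntegrable
      rw [uIcc_of_le ha]
      exact Icc_subset_Icc_right (hx.1.trans hx.2)
    · refine (hρ.mono ?_).intervalIntegrable
      rw [uIcc_of_le hx.1]
      exact Icc_subset_Icc ha hx.2
  calc ρ x ≤ -C * log ε * (∫ s in a..x, ρ s) + C * ε * x := hsplit ▸ hineq ε hε hε1 x hx₀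
    _ ≤ -C * log ε * (∫ s in a..x, ρ s) + C * T * ε := by
        linarith [mul_le_mul_of_nonneg_left hx.2 (mul_nonneg hC hε.le)]

theorem stmt12_general (T C : ℝ) (hC : 0 < C) (ρ : ℝ → ℝ)
    (hcont : ContinuousOn ρ (Set.Icc 0 T)) (hnonneg : ∀ t ∈ Set.Icc 0 T, 0 ≤ ρ t)
    (hineq : ∀ ε : ℝ, 0 < ε → ε < 1 → ∀ t ∈ Set.Icc 0 T,
      ρ t ≤ (-C * Real.log ε) * (∫ s in (0:ℝ)..t, ρ s) + C * ε * t) :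
    ∀ t ∈ Set.Icc 0 T, ρ t = 0 := by
  have hstep : ∀ a, 0 ≤ a → ∫ s in 0..a, ρ s = 0 → ∀ t ∈ Icc a T, C * (t - a) < 1 → ρ t = 0 :=
    fun a ha hρa t ht hCt =>
      (nonpos_of_integral_eq_zero hC.le hcont hineq ha hρa ht hCt).antisymm
        (hnonneg t ⟨ha.trans ht.1, ht.2⟩)
  have hind : ∀ n : ℕ, ∀ t ∈ Icc 0 T, 2 * C * t ≤ n → ρ t = 0 := by
    intro n
    induction n with
    | zero =>
      intro t ht htn
      rw [Nat.cast_zero] at htn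
      exact hstep 0 le_rfl integral_same t ht (by linarith)
    | succ n ih =>
      intro t ht htn
      by_cases hn : 2 * C * t ≤ n
      · exact ih t ht hn
      set a : ℝ := n / (2 * C)
      have ha : 0 ≤ a := by positivity
      have hat : a ≤ t := by rw [div_le_iff₀ (by positivity)]; linarith
      have hCa : 2 * C * a = n := by simp only [a]; field_simp
      refine hstep a ha ((integral_congr (g := fun _ => 0) fun s hs => ?_).trans integral_zero) t
        ⟨hat, ht.2⟩ (by rw [Nat.cast_succ] at htn; linarith)
      rw [uIcc_of_le ha] at hs
      exact ih s ⟨hs.1, hs.2.trans (hat.trans ht.2)⟩ (by nlinarith [hs.2])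
  intro t ht
  obtain ⟨n, hn⟩ := exists_nat_ge (2 * C * t)
  exact hind n t ht hn

theorem stmt12 (T C : ℝ) (hT : 0 ≤ T) (hC : 0 < C) (ρ : ℝ → ℝ)
    (hcont : ContinuousOn ρ (Set.Icc 0 T)) (hnonneg : ∀ t ∈ Set.Icc 0 T, 0 ≤ ρ t)
    (hineq : ∀ ε : ℝ, 0 < ε → ε < 1 → ∀ t ∈ Set.Icc 0 T,
      ρ t ≤ (-C * Real.log ε) * (∫ s in (0:ℝ)..t, ρ s) + C * ε * t) :
    ∀ t ∈ Set.Icc 0 T, ρ t = 0 :=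
  stmt12_general T C hC ρ hcont hnonneg hineq
end

section
/- Geometric smallness from the factorial bound: with C > 0, let t* = min(1/(2Ce), 1). Then for all 0 ≤ t ≤ t* and all integers n ≥ 1, taking ε = e^{−(n−1)}, the quantity Cⁿ (−ln ε + 1)^(n−1) tⁿ/n! + C t ε^(1−Ct) e^{Ct} is bounded by (1/(√(2π) n^(3/2)))·(1/2)ⁿ + C·e·e^{−n/2}; in particular this bound tends to 0 geometrically as n → ∞. -/
/-!
Stirling's bound `√(2πn) (n/e)ⁿ ≤ n!` gives `nⁿ⁻¹ / n! ≤ eⁿ / (√(2π) n^{3/2})`, so the first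
term is at most `(C t e)ⁿ / (√(2π) n^{3/2})`, and `C t e ≤ 1/2` by the choice of `t*`.
In the second term `C t ≤ 1/2` forces the exponent `-(n-1)(1 - C t) + C t` below `1 - n/2`.
-/

open Real Nat

lemma pow_pred_div_factorial_le {n : ℕ} (hn : n ≠ 0) :
    (n : ℝ) ^ (n - 1) / n ! ≤ exp 1 ^ n / (√(2 * π) * (n : ℝ) ^ ((3 : ℝ) / 2)) := by
  have hn' : (0 : ℝ) < n := by positivity
  have h32 : (n : ℝ) ^ ((3 : ℝ) / 2) = √n * n := by
    rw [show (3 : ℝ) / 2 = 1 / 2 + 1 by norm_num, rpow_add hn', rpow_one, sqrt_eq_rpow]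
  have hpow : (n : ℝ) ^ n = (n : ℝ) ^ (n - 1) * n := by
    rw [← pow_succ, Nat.sub_add_cancel (Nat.one_le_iff_ne_zero.mpr hn)]
  have hstirling := Stirling.le_factorial_stirling n
  rw [sqrt_mul (by positivity), div_pow, hpow] at hstirling
  rw [div_le_div_iff₀ (by positivity) (by positivity), h32]
  calc (n : ℝ) ^ (n - 1) * (√(2 * π) * (√n * n))
      = √(2 * π) * √n * ((n : ℝ) ^ (n - 1) * n / exp 1 ^ n) * exp 1 ^ n := by
        field_simp
    _ ≤ exp 1 ^ n * n ! := by rw [mul_comm (exp 1 ^ n)]; gcongr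

lemma pow_mul_pow_pred_div_factorial_le {x : ℝ} (hx : 0 ≤ x) (hxe : x * exp 1 ≤ 1 / 2)
    {n : ℕ} (hn : n ≠ 0) :
    x ^ n * (n : ℝ) ^ (n - 1) / n ! ≤ 1 / (√(2 * π) * (n : ℝ) ^ ((3 : ℝ) / 2)) * (1 / 2) ^ n :=
  calc x ^ n * (n : ℝ) ^ (n - 1) / n ! = x ^ n * ((n : ℝ) ^ (n - 1) / n !) := mul_div_assoc ..
    _ ≤ x ^ n * (exp 1 ^ n / (√(2 * π) * (n : ℝ) ^ ((3 : ℝ) / 2))) := by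
        gcongr ?_ * ?_; exact pow_pred_div_factorial_le hn
    _ = 1 / (√(2 * π) * (n : ℝ) ^ ((3 : ℝ) / 2)) * (x * exp 1) ^ n := by ring
    _ ≤ 1 / (√(2 * π) * (n : ℝ) ^ ((3 : ℝ) / 2)) * (1 / 2) ^ n := by gcongr

lemma exp_neg_rpow_one_sub_mul_exp_le {m x : ℝ} (hm : 0 ≤ m) (hx : x ≤ 1 / 2) :
    exp (-m) ^ (1 - x) * exp x ≤ exp ((1 - m) / 2) := by
  rw [← exp_mul, ← exp_add, exp_le_exp]
  nlinarith

theorem stmt16 (C : ℝ) (hC : 0 < C) (n : ℕ) (hn : 1 ≤ n) (t : ℝ)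
    (ht : t ∈ Set.Icc 0 (min (1 / (2 * C * Real.exp 1)) 1)) :
    C ^ n * (-Real.log (Real.exp (-((n : ℝ) - 1))) + 1) ^ (n - 1) * t ^ n / (Nat.factorial n : ℝ)
        + C * t * Real.exp (-((n : ℝ) - 1)) ^ (1 - C * t) * Real.exp (C * t) ≤
      1 / (Real.sqrt (2 * Real.pi) * (n : ℝ) ^ ((3 : ℝ) / 2)) * (1 / 2) ^ n +
        C * Real.exp 1 * Real.exp (-(n : ℝ) / 2) := by
  obtain ⟨ht0, ht⟩ := ht
  have hCte : C * t * exp 1 ≤ 1 / 2 := by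
    have := (le_div_iff₀ (by positivity)).mp (ht.trans (min_le_left _ _))
    linarith
  have hCt : C * t ≤ 1 / 2 := by nlinarith [add_one_le_exp (1 : ℝ), mul_nonneg hC.le ht0]
  have hn1 : (0 : ℝ) ≤ n - 1 := by
    rw [sub_nonneg]; exact_mod_cast hn
  have hfirst := pow_mul_pow_pred_div_factorial_le (by positivity) hCte (n := n) (by omega)
  have hsecond := exp_neg_rpow_one_sub_mul_exp_le hn1 hCt
  rw [show (1 - ((n : ℝ) - 1)) / 2 = 1 + -(n : ℝ) / 2 by ring, exp_add] at hsecond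
  have hCtC : C * t ≤ C := by nlinarith [ht.trans (min_le_right _ _)]
  rw [log_exp, show -(-((n : ℝ) - 1)) + 1 = n by ring]
  calc C ^ n * (n : ℝ) ^ (n - 1) * t ^ n / n ! +
        C * t * exp (-((n : ℝ) - 1)) ^ (1 - C * t) * exp (C * t)
      = (C * t) ^ n * (n : ℝ) ^ (n - 1) / n ! +
          C * t * (exp (-((n : ℝ) - 1)) ^ (1 - C * t) * exp (C * t)) := by ring
    _ ≤ 1 / (√(2 * π) * (n : ℝ) ^ ((3 : ℝ) / 2)) * (1 / 2) ^ n + C * (exp 1 * exp (-(n : ℝ) / 2)) :=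
        add_le_add hfirst (mul_le_mul hCtC hsecond (by positivity) hC.le)
    _ = _ := by ring
end

section
/- Picard iteration with bounded quasi-Lipschitz velocity converges: let u : ℝ² × [0,T] → ℝ² satisfy |u(x,t)| ≤ C for all (x,t) and |u(x₁,t) − u(x₂,t)| ≤ C·χ(|x₁ − x₂|) for all x₁, x₂, t, where χ(r) = (1 − ln r)r for 0 < r < 1 and χ(r) = 1 for r ≥ 1. Then for each a the Picard iterates Φ⁰ₜ(a) = a, Φᵏₜ(a) = a + ∫₀ᵗ u(Φᵏ⁻¹ₛ(a), s) ds satisfy, for all k ≥ 1 and t in [0, min(T, 1/(2Ce))], |Φᵏₜ(a) − Φᵏ⁻¹ₜ(a)| ≤ (1/(√(2π) k^(3/2)))·(1/2)ᵏ + C t e^{−k/2}; hence (Φᵏₜ(a)) is Cauchy and converges to a solution of Φₜ(a) = a + ∫₀ᵗ u(Φₛ(a), s) ds. -/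
open MeasureTheory intervalIntegral

noncomputable def picard (u : EuclideanSpace ℝ (Fin 2) → ℝ → EuclideanSpace ℝ (Fin 2)) :
    ℕ → EuclideanSpace ℝ (Fin 2) → ℝ → EuclideanSpace ℝ (Fin 2)
  | 0 => fun a _ => a
  | k + 1 => fun a t => a + ∫ s in (0:ℝ)..t, u (picard u k a s) s

/-!
Since `chi r ≤ exp (-K) + K * r` for every `K ≥ 0`, the distances between consecutive iterates
obey a linear integral recursion with source term `C * exp (-K) * t`; it is solved by
`C (C K)ᵐ tᵐ⁺¹ / (m + 1)! + C exp (-K) t exp (C K t)`, and the choice `K = k` together with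
Stirling's lower bound for `k!` gives the quantitative estimate.

For convergence on all of `[0, T]`, the diameter of the tail `{Φʲₜ(a) : j ≥ k}` decreases in `k` to
a continuous function `δ` with `δ t ≤ C ∫₀ᵗ chi (δ s) ds`. Osgood's argument (the same
linearisation, then Grönwall on successive intervals of length `1 / (2C)`) forces `δ = 0`, so the
iterates are Cauchy, and dominated convergence passes to the limit in the integral equation.
-/

open Real Set Filter Topology
open scoped Nat

local notation "ℝ²" => EuclideanSpace ℝ (Fin 2)

lemma chi_zero : chi 0 = 0 := by simp [chi]

lemma chi_nonneg {r : ℝ} (hr : 0 ≤ r) : 0 ≤ chi r := by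
  unfold chi
  split_ifs with h
  · rcases hr.eq_or_lt with rfl | hr
    · simp
    · nlinarith [log_neg hr h]
  · exact zero_le_one

/-- For `0 < r < 1` the right-hand side is minimised at `K = -log r`, where it equals `chi r`. -/
lemma chi_le_exp_neg_add_mul {r K : ℝ} (hr : 0 ≤ r) (hK : 0 ≤ K) : chi r ≤ exp (-K) + K * r := by
  unfold chi
  split_ifs with h
  · rcases hr.eq_or_lt with rfl | hr
    · simpa using (exp_pos (-K)).le
    · have key := log_le_sub_one_of_pos (div_pos (exp_pos (-K)) hr)
      rw [log_div (exp_pos _).ne' hr.ne', log_exp, le_sub_iff_add_le, le_div_iff₀ hr] at key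
      nlinarith
  · nlinarith [add_one_le_exp (-K)]

lemma chi_le_one {r : ℝ} (hr : 0 ≤ r) : chi r ≤ 1 := by
  simpa using chi_le_exp_neg_add_mul hr le_rfl

lemma chi_monotoneOn : MonotoneOn chi (Ici 0) := by
  intro r (hr : 0 ≤ r) r' (hr' : 0 ≤ r') hrr'
  by_cases h' : r' < 1
  · rcases hr'.eq_or_lt with h0 | h0
    · rw [← h0, le_antisymm (h0 ▸ hrr') hr]
    have hK : 0 ≤ -log r' := neg_nonneg.2 (log_nonpos h0.le h'.le)
    calc chi r ≤ exp (-(-log r')) + (-log r') * r := chi_le_exp_neg_add_mul hr hK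
      _ ≤ exp (-(-log r')) + (-log r') * r' := by gcongr
      _ = chi r' := by rw [neg_neg, exp_log h0, chi, if_pos h']; ring
  · rw [show chi r' = 1 from if_neg h']
    exact chi_le_one hr

lemma continuous_chi : Continuous chi := by
  have h : chi = fun r => if 1 ≤ r then 1 else r - r * log r := by
    funext r
    by_cases hr : r < 1
    · rw [chi, if_pos hr, if_neg (not_le.2 hr)]; ring
    · rw [chi, if_neg hr, if_pos (not_lt.1 hr)]
  rw [h]
  exact continuous_const.if_le (continuous_id.sub continuous_mul_log) continuous_const
    continuous_id fun r hr => by simp [← hr]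

lemma integral_chi_le {g : ℝ → ℝ} {a b K : ℝ} (hg : Continuous g) (hg0 : ∀ s, 0 ≤ g s)
    (hab : a ≤ b) (hK : 0 ≤ K) :
    ∫ x in a..b, chi (g x) ≤ (b - a) * exp (-K) + K * ∫ x in a..b, g x := by
  calc ∫ x in a..b, chi (g x) ≤ ∫ x in a..b, (exp (-K) + K * g x) :=
        integral_mono_on hab ((continuous_chi.comp hg).intervalIntegrable _ _)
          ((by fun_prop : Continuous fun x => exp (-K) + K * g x).intervalIntegrable _ _)
          fun x _ => chi_le_exp_neg_add_mul (hg0 x) hK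
    _ = (b - a) * exp (-K) + K * ∫ x in a..b, g x := by
        rw [intervalIntegral.integral_add intervalIntegrable_const
          ((hg.intervalIntegrable _ _).const_mul K), intervalIntegral.integral_const,
          intervalIntegral.integral_const_mul, smul_eq_mul]

lemma le_mul_exp_of_le_add_integral {g : ℝ → ℝ} {a b α β : ℝ} (hg : Continuous g) (hβ : 0 ≤ β)
    (h : ∀ s ∈ Icc a b, g s ≤ α + β * ∫ x in a..s, g x) :
    ∀ s ∈ Icc a b, g s ≤ α * exp (β * (s - a)) := by
  set G : ℝ → ℝ := fun s => α + β * ∫ x in a..s, g x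
  have hG : ∀ s, HasDerivAt G (β * g s) s := fun s =>
    ((hg.integral_hasStrictDerivAt a s).hasDerivAt.const_mul β).const_add α
  have hGcont : Continuous G := continuous_iff_continuousAt.2 fun s => (hG s).continuousAt
  have gronwall := le_gronwallBound_of_liminf_deriv_right_le (f := G) (f' := fun s => β * g s)
    (δ := α) (K := β) (ε := 0) (a := a) (b := b) hGcont.continuousOn
    (fun x _ r hr => (hG x).hasDerivWithinAt.liminf_right_slope_le hr) (by simp [G])
    (fun x hx => by simpa using mul_le_mul_of_nonneg_left (h x (Ico_subset_Icc_self hx)) hβ)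
  intro s hs
  rw [← gronwallBound_ε0]
  exact (h s hs).trans (gronwall s hs)

section Osgood

variable {g : ℝ → ℝ} {C : ℝ}

lemma eq_zero_on_Icc_add_of_le_integral_chi (hC : 0 < C) (hg : Continuous g) (hg0 : ∀ t, 0 ≤ g t)
    (h : ∀ t, 0 ≤ t → g t ≤ C * ∫ s in 0..t, chi (g s)) {t₀ : ℝ} (ht₀ : 0 ≤ t₀)
    (hzero : ∀ s ∈ Icc 0 t₀, g s = 0) : ∀ s ∈ Icc t₀ (t₀ + 1 / (2 * C)), g s = 0 := by
  -- On an interval of length `δ = 1 / (2C)` Grönwall's factor `exp (C K δ) = exp (K / 2)` only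
  -- eats half of the gain `exp (-K)` of the linearisation of `chi`.
  set δ := 1 / (2 * C)
  have hchig : Continuous fun s => chi (g s) := continuous_chi.comp hg
  have hsplit : ∀ s, ∫ x in 0..s, chi (g x) = ∫ x in t₀..s, chi (g x) := fun s => by
    have hvanish : ∫ x in 0..t₀, chi (g x) = 0 := by
      rw [integral_congr (g := fun _ => 0) fun x hx => by
        simp [hzero x (uIcc_of_le ht₀ ▸ hx), chi_zero]]
      exact integral_zero
    rw [← integral_add_adjacent_intervals (hchig.intervalIntegrable 0 t₀)
      (hchig.intervalIntegrable t₀ s), hvanish, zero_add]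
  have hbound : ∀ K, 0 ≤ K → ∀ s ∈ Icc t₀ (t₀ + δ), g s ≤ exp (-(K / 2)) / 2 := by
    intro K hK
    have hlin : ∀ s ∈ Icc t₀ (t₀ + δ), g s ≤ C * δ * exp (-K) + C * K * ∫ x in t₀..s, g x := by
      intro s hs
      calc g s ≤ C * ∫ x in t₀..s, chi (g x) := hsplit s ▸ h s (ht₀.trans hs.1)
        _ ≤ C * ((s - t₀) * exp (-K) + K * ∫ x in t₀..s, g x) := by
            gcongr; exact integral_chi_le hg hg0 hs.1 hK
        _ = C * (s - t₀) * exp (-K) + C * K * ∫ x in t₀..s, g x := by ring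
        _ ≤ C * δ * exp (-K) + C * K * ∫ x in t₀..s, g x := by
            gcongr
            linarith [hs.2]
    intro s hs
    calc g s ≤ C * δ * exp (-K) * exp (C * K * (s - t₀)) :=
          le_mul_exp_of_le_add_integral hg (by positivity) hlin s hs
      _ ≤ C * δ * exp (-K) * exp (C * K * δ) := by
          gcongr
          linarith [hs.2]
      _ = exp (-(K / 2)) / 2 := by
          have hCδ : C * δ = 1 / 2 := by simp only [δ]; field_simp
          rw [show C * K * δ = K * (C * δ) by ring, hCδ, mul_assoc, ← exp_add]
          ring_nf
  have hlim : Tendsto (fun K => exp (-(K / 2)) / 2) atTop (𝓝 0) := by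
    simpa using ((tendsto_exp_neg_atTop_nhds_zero.comp
      (tendsto_id.atTop_div_const (by norm_num : (0:ℝ) < 2))).div_const 2)
  intro s hs
  exact le_antisymm (ge_of_tendsto hlim (eventually_ge_atTop 0 |>.mono fun K hK =>
    hbound K hK s hs)) (hg0 s)

lemma eq_zero_of_le_integral_chi (hC : 0 < C) (hg : Continuous g) (hg0 : ∀ t, 0 ≤ g t)
    (h : ∀ t, 0 ≤ t → g t ≤ C * ∫ s in 0..t, chi (g s)) : ∀ t, 0 ≤ t → g t = 0 := by
  set δ := 1 / (2 * C)
  have hδ : 0 < δ := by positivity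
  have hsteps : ∀ n : ℕ, ∀ s ∈ Icc 0 (n * δ), g s = 0 := by
    intro n
    induction n with
    | zero =>
      intro s hs
      obtain rfl : s = 0 := by simpa using hs
      exact le_antisymm (by simpa using h 0 le_rfl) (hg0 0)
    | succ n ih =>
      intro s hs
      by_cases hsn : s ≤ n * δ
      · exact ih s ⟨hs.1, hsn⟩
      · exact eq_zero_on_Icc_add_of_le_integral_chi hC hg hg0 h (by positivity) ih s
          ⟨(not_le.1 hsn).le, by push_cast at hs; linarith [hs.2]⟩
  intro t ht
  obtain ⟨n, hn⟩ := exists_nat_ge (t / δ)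
  exact hsteps n t ⟨ht, (div_le_iff₀ hδ).1 hn⟩

end Osgood

lemma mul_integral_mul_exp_le {β t : ℝ} (hβ : 0 ≤ β) (ht : 0 ≤ t) :
    β * ∫ s in 0..t, s * exp (β * s) ≤ t * (exp (β * t) - 1) := by
  have hprim : ∫ s in 0..t, β * exp (β * s) = exp (β * t) - 1 := by
    rw [integral_eq_sub_of_hasDerivAt (f := fun s => exp (β * s))
      (fun x _ => by simpa [mul_comm] using ((hasDerivAt_id x).const_mul β).exp)
      ((by fun_prop : Continuous fun s => β * exp (β * s)).intervalIntegrable _ _)]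
    simp
  calc β * ∫ s in 0..t, s * exp (β * s) ≤ β * ∫ s in 0..t, t * exp (β * s) := by
        gcongr
        exact integral_mono_on ht
          ((by fun_prop : Continuous fun s => s * exp (β * s)).intervalIntegrable _ _)
          ((by fun_prop : Continuous fun s => t * exp (β * s)).intervalIntegrable _ _)
          fun s hs => by gcongr; exact hs.2
    _ = t * ∫ s in 0..t, β * exp (β * s) := by
        rw [intervalIntegral.integral_const_mul, intervalIntegral.integral_const_mul]; ring
    _ = t * (exp (β * t) - 1) := by rw [hprim]

lemma le_pow_div_factorial_add_mul_exp {f : ℕ → ℝ → ℝ} {α β γ : ℝ} (hf : ∀ m, Continuous (f m))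
    (hα : 0 ≤ α) (hβ : 0 ≤ β) (h0 : ∀ t, 0 ≤ t → f 0 t ≤ γ * t)
    (hsucc : ∀ m t, 0 ≤ t → f (m + 1) t ≤ α * t + β * ∫ s in 0..t, f m s) (m : ℕ) {t : ℝ}
    (ht : 0 ≤ t) : f m t ≤ γ * β ^ m * t ^ (m + 1) / (m + 1)! + α * t * exp (β * t) := by
  induction m generalizing t with
  | zero =>
    have : 0 ≤ α * t * exp (β * t) := by positivity
    simpa using (h0 t ht).trans (le_add_of_nonneg_right this)
  | succ m ih =>
    set c := γ * β ^ m / (m + 1)!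
    have hint : ∫ s in 0..t, f m s ≤ ∫ s in 0..t, (c * s ^ (m + 1) + α * (s * exp (β * s))) :=
      integral_mono_on ht ((hf m).intervalIntegrable _ _) ((by fun_prop : Continuous fun s =>
        c * s ^ (m + 1) + α * (s * exp (β * s))).intervalIntegrable _ _)
        fun s hs => (ih hs.1).trans_eq (by simp only [c]; ring)
    have hcalc : ∫ s in 0..t, (c * s ^ (m + 1) + α * (s * exp (β * s)))
        = c * (t ^ (m + 2) / (m + 2)) + α * ∫ s in 0..t, s * exp (β * s) := by
      rw [intervalIntegral.integral_add
        ((by fun_prop : Continuous fun s => c * s ^ (m + 1)).intervalIntegrable _ _)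
        ((by fun_prop : Continuous fun s => α * (s * exp (β * s))).intervalIntegrable _ _),
        intervalIntegral.integral_const_mul, intervalIntegral.integral_const_mul, integral_pow]
      congr 2
      push_cast
      ring
    have hexp := mul_le_mul_of_nonneg_left (mul_integral_mul_exp_le hβ ht) hα
    calc f (m + 1) t ≤ α * t + β * ∫ s in 0..t, f m s := hsucc m t ht
      _ ≤ α * t + β * (c * (t ^ (m + 2) / (m + 2)) + α * ∫ s in 0..t, s * exp (β * s)) := by
          rw [← hcalc]; gcongr
      _ = γ * β ^ (m + 1) * t ^ (m + 1 + 1) / (m + 1 + 1)!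
            + (α * t + α * (β * ∫ s in 0..t, s * exp (β * s))) := by
          rw [Nat.factorial_succ (m + 1)]
          simp only [c]
          push_cast
          field_simp
          ring
      _ ≤ γ * β ^ (m + 1) * t ^ (m + 1 + 1) / (m + 1 + 1)! + α * t * exp (β * t) := by
          linarith [hexp, show α * (t * (exp (β * t) - 1)) = α * t * exp (β * t) - α * t by ring]

lemma pow_mul_sqrt_le_factorial {x : ℝ} (hx0 : 0 ≤ x) (hx : x ≤ 1 / (2 * exp 1)) (k : ℕ) :
    (k * x) ^ k * √(2 * π * k) ≤ (1 / 2) ^ k * k ! := by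
  calc (k * x) ^ k * √(2 * π * k) ≤ (k * (1 / (2 * exp 1))) ^ k * √(2 * π * k) := by gcongr
    _ = (1 / 2) ^ k * (√(2 * π * k) * (k / exp 1) ^ k) := by
        rw [show (k : ℝ) * (1 / (2 * exp 1)) = 1 / 2 * (k / exp 1) by ring, mul_pow]; ring
    _ ≤ (1 / 2) ^ k * k ! := by gcongr; exact Stirling.le_factorial_stirling k

section Picard

variable {u : ℝ² → ℝ → ℝ²} {C : ℝ} {a : ℝ²}

lemma picard_succ_apply (k : ℕ) (t : ℝ) :
    picard u (k + 1) a t = a + ∫ s in 0..t, u (picard u k a s) s := rfl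

lemma picard_apply_zero (k : ℕ) : picard u k a 0 = a := by
  cases k <;> simp [picard]

lemma continuous_picard (hu : Continuous fun p : ℝ² × ℝ => u p.1 p.2) (k : ℕ) :
    Continuous (picard u k a) := by
  induction k with
  | zero => exact continuous_const
  | succ k ih =>
    exact continuous_const.add (continuous_primitive
      (hu.comp (ih.prodMk continuous_id)).intervalIntegrable 0)

lemma continuous_picard_integrand (hu : Continuous fun p : ℝ² × ℝ => u p.1 p.2) (k : ℕ) :
    Continuous fun s => u (picard u k a s) s :=
  hu.comp ((continuous_picard hu k).prodMk continuous_id)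

lemma dist_picard_le (hu : Continuous fun p : ℝ² × ℝ => u p.1 p.2) (hbdd : ∀ x t, ‖u x t‖ ≤ C)
    (k : ℕ) (t t' : ℝ) : dist (picard u k a t) (picard u k a t') ≤ C * dist t t' := by
  cases k with
  | zero => simpa [picard] using mul_nonneg ((norm_nonneg _).trans (hbdd a 0)) dist_nonneg
  | succ k =>
    have hint := (continuous_picard_integrand (a := a) hu k).intervalIntegrable (μ := volume)
    rw [dist_eq_norm, picard_succ_apply, picard_succ_apply, add_sub_add_left_eq_sub,
      integral_interval_sub_left (hint 0 t) (hint 0 t'), Real.dist_eq]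
    exact norm_integral_le_of_norm_le_const fun s _ => hbdd _ s

lemma dist_picard_succ_le (hu : Continuous fun p : ℝ² × ℝ => u p.1 p.2)
    (hqL : ∀ x₁ x₂ t, ‖u x₁ t - u x₂ t‖ ≤ C * chi (dist x₁ x₂)) (i j : ℕ) {t : ℝ} (ht : 0 ≤ t) :
    dist (picard u (i + 1) a t) (picard u (j + 1) a t) ≤
      C * ∫ s in 0..t, chi (dist (picard u i a s) (picard u j a s)) := by
  have hint := fun k => (continuous_picard_integrand (a := a) hu k).intervalIntegrable
    (μ := volume) 0 t
  rw [dist_eq_norm, picard_succ_apply, picard_succ_apply, add_sub_add_left_eq_sub,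
    ← integral_sub (hint i) (hint j), ← intervalIntegral.integral_const_mul]
  refine (intervalIntegral.norm_integral_le_integral_norm ht).trans
    (integral_mono_on ht ?_ ?_ fun s _ => hqL _ _ s)
  · exact ((continuous_picard_integrand hu i).sub (continuous_picard_integrand hu j)).norm
      |>.intervalIntegrable _ _
  · exact (continuous_const.mul (continuous_chi.comp
      ((continuous_picard hu i).dist (continuous_picard hu j)))).intervalIntegrable _ _

lemma dist_picard_succ_picard_le (hu : Continuous fun p : ℝ² × ℝ => u p.1 p.2)
    (hbdd : ∀ x t, ‖u x t‖ ≤ C) (hqL : ∀ x₁ x₂ t, ‖u x₁ t - u x₂ t‖ ≤ C * chi (dist x₁ x₂))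
    {K : ℝ} (hK : 0 ≤ K) (m : ℕ) {t : ℝ} (ht : 0 ≤ t) :
    dist (picard u (m + 1) a t) (picard u m a t) ≤
      C * (C * K) ^ m * t ^ (m + 1) / (m + 1)! + C * exp (-K) * t * exp (C * K * t) := by
  have hC : 0 ≤ C := (norm_nonneg _).trans (hbdd a 0)
  have hcont : ∀ m, Continuous fun s => dist (picard u (m + 1) a s) (picard u m a s) :=
    fun m => (continuous_picard hu _).dist (continuous_picard hu _)
  refine le_pow_div_factorial_add_mul_exp hcont (by positivity) (by positivity) (fun t ht => ?_)
    (fun m t ht => ?_) m ht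
  · show dist (picard u 1 a t) a ≤ C * t
    simpa [abs_of_nonneg ht, picard_apply_zero] using dist_picard_le (a := a) hu hbdd 1 t 0
  · set d := fun s => dist (picard u (m + 1) a s) (picard u m a s)
    calc dist (picard u (m + 1 + 1) a t) (picard u (m + 1) a t)
        ≤ C * ∫ s in 0..t, chi (d s) := dist_picard_succ_le hu hqL _ _ ht
      _ ≤ C * ((t - 0) * exp (-K) + K * ∫ s in 0..t, d s) := by
          gcongr; exact integral_chi_le (hcont m) (fun _ => dist_nonneg) ht hK
      _ = C * exp (-K) * t + C * K * ∫ s in 0..t, d s := by ring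

lemma norm_picard_sub_picard_pred_le (hu : Continuous fun p : ℝ² × ℝ => u p.1 p.2)
    (hbdd : ∀ x t, ‖u x t‖ ≤ C) (hqL : ∀ x₁ x₂ t, ‖u x₁ t - u x₂ t‖ ≤ C * chi (dist x₁ x₂))
    {k : ℕ} (hk : 1 ≤ k) {t : ℝ} (ht : 0 ≤ t) (hCt : C * t ≤ 1 / (2 * exp 1)) :
    ‖picard u k a t - picard u (k - 1) a t‖ ≤
      1 / (√(2 * π) * (k : ℝ) ^ ((3 : ℝ) / 2)) * (1 / 2) ^ k + C * t * exp (-(k : ℝ) / 2) := by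
  obtain ⟨m, rfl⟩ : ∃ m, k = m + 1 := ⟨k - 1, by omega⟩
  have hC : 0 ≤ C := (norm_nonneg _).trans (hbdd a 0)
  set k : ℕ := m + 1
  have hk0 : (0 : ℝ) < k := by positivity
  rw [Nat.add_sub_cancel, ← dist_eq_norm]
  -- `K = k` is the choice `ε = exp (-k)` in `chi r ≤ ε + (-log ε) r`
  refine (dist_picard_succ_picard_le (a := a) hu hbdd hqL hk0.le m ht).trans (add_le_add ?_ ?_)
  · have hrpow : (k : ℝ) ^ ((3 : ℝ) / 2) = k * √k := by
      rw [show (3 : ℝ) / 2 = 1 + 1 / 2 by norm_num, rpow_add hk0, rpow_one, sqrt_eq_rpow]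
    have hstirling := pow_mul_sqrt_le_factorial (mul_nonneg hC ht) hCt k
    calc C * (C * k) ^ m * t ^ (m + 1) / (m + 1)! = (k * (C * t)) ^ k / (k * k !) := by
          simp only [k]; field_simp; ring
      _ ≤ (1 / 2) ^ k / (k * √(2 * π * k)) := by
          rw [div_le_div_iff₀ (by positivity) (by positivity)]
          nlinarith [mul_le_mul_of_nonneg_left hstirling hk0.le]
      _ = 1 / (√(2 * π) * (k : ℝ) ^ ((3 : ℝ) / 2)) * (1 / 2) ^ k := by
          rw [hrpow, sqrt_mul (by positivity)]; ring
  · have hexp : -(k : ℝ) + C * k * t ≤ -k / 2 := by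
      have : C * t ≤ 1 / 2 := hCt.trans (by
        rw [div_le_div_iff_of_pos_left one_pos (by positivity) two_pos]
        linarith [add_one_le_exp 1])
      nlinarith
    calc C * exp (-k) * t * exp (C * k * t) = C * t * exp (-k + C * k * t) := by
          rw [exp_add]; ring
      _ ≤ C * t * exp (-k / 2) := by gcongr

noncomputable def picardTailDiam (u : ℝ² → ℝ → ℝ²) (a : ℝ²) (k : ℕ) (t : ℝ) : ℝ :=
  Metric.diam ((fun j => picard u j a t) '' Ici k)

lemma picardTailDiam_nonneg (k : ℕ) (t : ℝ) : 0 ≤ picardTailDiam u a k t := Metric.diam_nonneg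

lemma isBounded_picard_image (hu : Continuous fun p : ℝ² × ℝ => u p.1 p.2)
    (hbdd : ∀ x t, ‖u x t‖ ≤ C) (s : Set ℕ) (t : ℝ) :
    Bornology.IsBounded ((fun j => picard u j a t) '' s) := by
  refine Metric.isBounded_closedBall (x := a) (r := C * dist t 0) |>.subset ?_
  rintro _ ⟨j, -, rfl⟩
  simpa [picard_apply_zero] using dist_picard_le (a := a) hu hbdd j t 0

lemma dist_picard_le_picardTailDiam (hu : Continuous fun p : ℝ² × ℝ => u p.1 p.2)
    (hbdd : ∀ x t, ‖u x t‖ ≤ C) {k i j : ℕ} (hi : k ≤ i) (hj : k ≤ j) (t : ℝ) :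
    dist (picard u i a t) (picard u j a t) ≤ picardTailDiam u a k t :=
  Metric.dist_le_diam_of_mem (isBounded_picard_image hu hbdd _ t) ⟨i, hi, rfl⟩ ⟨j, hj, rfl⟩

lemma picardTailDiam_le {k : ℕ} {t r : ℝ} (hr : 0 ≤ r)
    (h : ∀ i j, k ≤ i → k ≤ j → dist (picard u i a t) (picard u j a t) ≤ r) :
    picardTailDiam u a k t ≤ r := by
  refine Metric.diam_le_of_forall_dist_le hr ?_
  rintro _ ⟨i, hi, rfl⟩ _ ⟨j, hj, rfl⟩
  exact h i j hi hj

lemma picardTailDiam_antitone (hu : Continuous fun p : ℝ² × ℝ => u p.1 p.2)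
    (hbdd : ∀ x t, ‖u x t‖ ≤ C) (t : ℝ) : Antitone fun k => picardTailDiam u a k t :=
  fun _ _ hkl => Metric.diam_mono (image_mono (Ici_subset_Ici.2 hkl))
    (isBounded_picard_image hu hbdd _ t)

lemma picardTailDiam_le_add (hu : Continuous fun p : ℝ² × ℝ => u p.1 p.2)
    (hbdd : ∀ x t, ‖u x t‖ ≤ C) (k : ℕ) (t t' : ℝ) :
    picardTailDiam u a k t ≤ picardTailDiam u a k t' + 2 * C * dist t t' := by
  have hC : 0 ≤ C := (norm_nonneg _).trans (hbdd a 0)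
  refine picardTailDiam_le (add_nonneg (picardTailDiam_nonneg _ _) (by positivity))
    fun i j hi hj => ?_
  calc dist (picard u i a t) (picard u j a t)
      ≤ dist (picard u i a t) (picard u i a t') + dist (picard u i a t') (picard u j a t')
        + dist (picard u j a t') (picard u j a t) := dist_triangle4 _ _ _ _
    _ ≤ C * dist t t' + picardTailDiam u a k t' + C * dist t' t := by
        gcongr
        · exact dist_picard_le hu hbdd i t t'
        · exact dist_picard_le_picardTailDiam hu hbdd hi hj t'
        · exact dist_picard_le hu hbdd j t' t
    _ = picardTailDiam u a k t' + 2 * C * dist t t' := by rw [dist_comm t' t]; ring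

lemma continuous_picardTailDiam (hu : Continuous fun p : ℝ² × ℝ => u p.1 p.2)
    (hbdd : ∀ x t, ‖u x t‖ ≤ C) (k : ℕ) : Continuous (picardTailDiam u a k) :=
  (LipschitzWith.of_le_add_mul' _ (picardTailDiam_le_add hu hbdd k)).continuous

lemma picardTailDiam_succ_le (hu : Continuous fun p : ℝ² × ℝ => u p.1 p.2)
    (hbdd : ∀ x t, ‖u x t‖ ≤ C) (hqL : ∀ x₁ x₂ t, ‖u x₁ t - u x₂ t‖ ≤ C * chi (dist x₁ x₂))
    (k : ℕ) {t : ℝ} (ht : 0 ≤ t) :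
    picardTailDiam u a (k + 1) t ≤ C * ∫ s in 0..t, chi (picardTailDiam u a k s) := by
  have hC : 0 ≤ C := (norm_nonneg _).trans (hbdd a 0)
  have hchi := continuous_chi.comp (continuous_picardTailDiam (a := a) hu hbdd k)
  refine picardTailDiam_le (mul_nonneg hC (intervalIntegral.integral_nonneg ht
    fun s _ => chi_nonneg (picardTailDiam_nonneg _ _))) fun i j hi hj => ?_
  obtain ⟨i, rfl⟩ := Nat.exists_eq_add_of_le' (by omega : 1 ≤ i)
  obtain ⟨j, rfl⟩ := Nat.exists_eq_add_of_le' (by omega : 1 ≤ j)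
  refine (dist_picard_succ_le hu hqL i j ht).trans (mul_le_mul_of_nonneg_left ?_ hC)
  refine integral_mono_on ht ?_ (hchi.intervalIntegrable _ _) fun s _ => ?_
  · exact (continuous_chi.comp ((continuous_picard hu i).dist (continuous_picard hu j)))
      |>.intervalIntegrable _ _
  · exact chi_monotoneOn dist_nonneg (picardTailDiam_nonneg _ _)
      (dist_picard_le_picardTailDiam hu hbdd (by omega) (by omega) s)

noncomputable def picardOscillation (u : ℝ² → ℝ → ℝ²) (a : ℝ²) (t : ℝ) : ℝ :=
  ⨅ k, picardTailDiam u a k t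

lemma tendsto_picardTailDiam (hu : Continuous fun p : ℝ² × ℝ => u p.1 p.2)
    (hbdd : ∀ x t, ‖u x t‖ ≤ C) (t : ℝ) :
    Tendsto (fun k => picardTailDiam u a k t) atTop (𝓝 (picardOscillation u a t)) :=
  tendsto_atTop_ciInf (picardTailDiam_antitone hu hbdd t)
    ⟨0, by rintro _ ⟨k, rfl⟩; exact picardTailDiam_nonneg k t⟩

lemma picardOscillation_nonneg (t : ℝ) : 0 ≤ picardOscillation u a t :=
  le_ciInf fun k => picardTailDiam_nonneg k t

lemma continuous_picardOscillation (hu : Continuous fun p : ℝ² × ℝ => u p.1 p.2)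
    (hbdd : ∀ x t, ‖u x t‖ ≤ C) : Continuous (picardOscillation u a) :=
  (LipschitzWith.of_le_add_mul' (2 * C) fun t t' =>
    le_of_tendsto_of_tendsto' (tendsto_picardTailDiam hu hbdd t)
      ((tendsto_picardTailDiam hu hbdd t').add_const _)
      fun k => picardTailDiam_le_add hu hbdd k t t').continuous

lemma picardOscillation_le_integral (hu : Continuous fun p : ℝ² × ℝ => u p.1 p.2)
    (hbdd : ∀ x t, ‖u x t‖ ≤ C) (hqL : ∀ x₁ x₂ t, ‖u x₁ t - u x₂ t‖ ≤ C * chi (dist x₁ x₂))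
    {t : ℝ} (ht : 0 ≤ t) :
    picardOscillation u a t ≤ C * ∫ s in 0..t, chi (picardOscillation u a s) := by
  have hdom : Tendsto (fun k => ∫ s in 0..t, chi (picardTailDiam u a k s)) atTop
      (𝓝 (∫ s in 0..t, chi (picardOscillation u a s))) :=
    tendsto_integral_filter_of_dominated_convergence (fun _ => 1)
      (Eventually.of_forall fun k =>
        (continuous_chi.comp (continuous_picardTailDiam hu hbdd k)).aestronglyMeasurable)
      (Eventually.of_forall fun k => ae_of_all _ fun s _ => by
        rw [norm_of_nonneg (chi_nonneg (picardTailDiam_nonneg k s))]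
        exact chi_le_one (picardTailDiam_nonneg k s))
      intervalIntegrable_const
      (ae_of_all _ fun s _ => continuous_chi.continuousAt.tendsto.comp
        (tendsto_picardTailDiam hu hbdd s))
  exact le_of_tendsto_of_tendsto' ((tendsto_picardTailDiam hu hbdd t).comp
    (tendsto_add_atTop_nat 1)) (hdom.const_mul C)
    fun k => picardTailDiam_succ_le hu hbdd hqL k ht

lemma cauchySeq_picard (hC : 0 < C) (hu : Continuous fun p : ℝ² × ℝ => u p.1 p.2)
    (hbdd : ∀ x t, ‖u x t‖ ≤ C) (hqL : ∀ x₁ x₂ t, ‖u x₁ t - u x₂ t‖ ≤ C * chi (dist x₁ x₂))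
    {t : ℝ} (ht : 0 ≤ t) : CauchySeq fun k => picard u k a t := by
  have hosc : picardOscillation u a t = 0 :=
    eq_zero_of_le_integral_chi hC (continuous_picardOscillation hu hbdd)
      picardOscillation_nonneg (fun _ hs => picardOscillation_le_integral hu hbdd hqL hs) t ht
  exact cauchySeq_of_le_tendsto_0 _
    (fun _ _ _ hn hm => dist_picard_le_picardTailDiam hu hbdd hn hm t)
    (hosc ▸ tendsto_picardTailDiam hu hbdd t)

lemma eq_add_integral_of_tendsto_picard (hu : Continuous fun p : ℝ² × ℝ => u p.1 p.2)
    (hbdd : ∀ x t, ‖u x t‖ ≤ C) {Φ : ℝ → ℝ²} {t : ℝ} (ht : 0 ≤ t)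
    (hΦ : ∀ s ∈ Icc 0 t, Tendsto (fun k => picard u k a s) atTop (𝓝 (Φ s))) :
    Φ t = a + ∫ s in 0..t, u (Φ s) s := by
  have hint : Tendsto (fun k => ∫ s in 0..t, u (picard u k a s) s) atTop
      (𝓝 (∫ s in 0..t, u (Φ s) s)) :=
    tendsto_integral_filter_of_dominated_convergence (fun _ => C)
      (Eventually.of_forall fun k => (continuous_picard_integrand hu k).aestronglyMeasurable)
      (Eventually.of_forall fun k => ae_of_all _ fun s _ => hbdd _ s)
      intervalIntegrable_const
      (ae_of_all _ fun s hs => (hu.tendsto (Φ s, s)).comp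
        ((hΦ s (Ioc_subset_Icc_self (uIoc_of_le ht ▸ hs))).prodMk_nhds tendsto_const_nhds))
  exact tendsto_nhds_unique ((hΦ t ⟨ht, le_rfl⟩).comp (tendsto_add_atTop_nat 1))
    (tendsto_const_nhds.add hint)

end Picard

theorem stmt17_general (T C : ℝ) (hC : 0 < C)
    (u : EuclideanSpace ℝ (Fin 2) → ℝ → EuclideanSpace ℝ (Fin 2))
    (hucont : Continuous fun p : EuclideanSpace ℝ (Fin 2) × ℝ => u p.1 p.2)
    (hbdd : ∀ x t, ‖u x t‖ ≤ C)
    (hqL : ∀ x₁ x₂ t, ‖u x₁ t - u x₂ t‖ ≤ C * chi (dist x₁ x₂)) :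
    ∀ a : EuclideanSpace ℝ (Fin 2),
      (∀ k, 1 ≤ k → ∀ t ∈ Set.Icc 0 (min T (1 / (2 * C * Real.exp 1))),
        ‖picard u k a t - picard u (k - 1) a t‖ ≤
          1 / (Real.sqrt (2 * Real.pi) * (k : ℝ) ^ ((3 : ℝ) / 2)) * (1 / 2) ^ k +
            C * t * Real.exp (-(k : ℝ) / 2)) ∧
      ∃ Φ : ℝ → EuclideanSpace ℝ (Fin 2),
        (∀ t ∈ Set.Icc 0 T,
          Filter.Tendsto (fun k => picard u k a t) Filter.atTop (nhds (Φ t))) ∧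
        ∀ t ∈ Set.Icc 0 T, Φ t = a + ∫ s in (0:ℝ)..t, u (Φ s) s := by
  intro a
  have hlim : ∀ t, 0 ≤ t → Tendsto (fun k => picard u k a t) atTop
      (𝓝 (limUnder atTop fun k => picard u k a t)) :=
    fun t ht => (cauchySeq_picard hC hucont hbdd hqL ht).tendsto_limUnder
  refine ⟨fun k hk t ht => norm_picard_sub_picard_pred_le hucont hbdd hqL hk ht.1 ?_,
    fun t => limUnder atTop fun k => picard u k a t, fun t ht => hlim t ht.1,
    fun t ht => eq_add_integral_of_tendsto_picard hucont hbdd ht.1 fun s hs => hlim s hs.1⟩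
  calc C * t ≤ C * (1 / (2 * C * exp 1)) := by gcongr; exact ht.2.trans (min_le_right _ _)
    _ = 1 / (2 * exp 1) := by field_simp

theorem stmt17 (T C : ℝ) (hT : 0 < T) (hC : 0 < C)
    (u : EuclideanSpace ℝ (Fin 2) → ℝ → EuclideanSpace ℝ (Fin 2))
    (hucont : Continuous fun p : EuclideanSpace ℝ (Fin 2) × ℝ => u p.1 p.2)
    (hbdd : ∀ x t, ‖u x t‖ ≤ C)
    (hqL : ∀ x₁ x₂ t, ‖u x₁ t - u x₂ t‖ ≤ C * chi (dist x₁ x₂)) :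
    ∀ a : EuclideanSpace ℝ (Fin 2),
      (∀ k, 1 ≤ k → ∀ t ∈ Set.Icc 0 (min T (1 / (2 * C * Real.exp 1))),
        ‖picard u k a t - picard u (k - 1) a t‖ ≤
          1 / (Real.sqrt (2 * Real.pi) * (k : ℝ) ^ ((3 : ℝ) / 2)) * (1 / 2) ^ k +
            C * t * Real.exp (-(k : ℝ) / 2)) ∧
      ∃ Φ : ℝ → EuclideanSpace ℝ (Fin 2),
        (∀ t ∈ Set.Icc 0 T,
          Filter.Tendsto (fun k => picard u k a t) Filter.atTop (nhds (Φ t))) ∧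
        ∀ t ∈ Set.Icc 0 T, Φ t = a + ∫ s in (0:ℝ)..t, u (Φ s) s :=
  stmt17_general T C hC u hucont hbdd hqL
end
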